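/- arXiv:2302.02996 — 2 statements merged into one kernel-verified Lean document; each statement's English description precedes it below -/
import Mathlib

section
/- There exists a cancellative semigroup that does not embed into any group. -/
/-!
Malcev's example is the monoid on `a, b, c, d, x, y, u, v` subject to `ax = by`, `cx = dy` and
`au = bv`. In a group these relations force `cu = dv`, because
`c a⁻¹ = (cx)(ax)⁻¹ = (dy)(by)⁻¹ = d b⁻¹`, and then `cu = c a⁻¹ · au = d b⁻¹ · bv = dv`.

Oriented as `ax → by`, `au → bv`, `cx → dy`, the relations form a rewriting system without
overlaps: the letters `a, c` that start a left-hand side never end one, and the right-hand sides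
start with `b, d`. Hence every word has a unique normal form, which can be built up one letter at
a time from either end, and adding a letter at either end acts injectively on normal forms. This
gives left and right cancellation, while `cu` and `dv` are distinct normal forms.
-/

theorem mul_eq_mul_of_mul_eq_mul_of_mul_eq_mul {G : Type*} [Group G] {a b c d x y u v : G}
    (hax : a * x = b * y) (hcx : c * x = d * y) (hau : a * u = b * v) : c * u = d * v :=
  calc c * u = c * x * (a * x)⁻¹ * (a * u) := by group
    _ = d * y * (b * y)⁻¹ * (b * v) := by rw [hcx, hax, hau]
    _ = d * v := by group

theorem MulHom.not_injective_of_mul_ne_mul {S G : Type*} [Mul S] [Group G]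
    {a b c d x y u v : S} (hax : a * x = b * y) (hcx : c * x = d * y) (hau : a * u = b * v)
    (hcu : c * u ≠ d * v) (f : S →ₙ* G) : ¬ Function.Injective f := fun hf =>
  hcu <| hf <| by
    have map_eq {p q r s : S} (h : p * q = r * s) : f p * f q = f r * f s := by
      rw [← map_mul f, ← map_mul f, h]
    rw [map_mul, map_mul]
    exact mul_eq_mul_of_mul_eq_mul_of_mul_eq_mul (map_eq hax) (map_eq hcx) (map_eq hau)

namespace Malcev

inductive Letter
  | a | b | c | d | x | y | u | v
  deriving DecidableEq

instance : Fintype Letter :=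
  ⟨{.a, .b, .c, .d, .x, .y, .u, .v}, fun p => by cases p <;> decide⟩

def rewritePair : Letter → Letter → List Letter
  | .a, .x => [.b, .y]
  | .a, .u => [.b, .v]
  | .c, .x => [.d, .y]
  | p, q => [p, q]

/-- Prepends a letter to a normal form and normalizes. -/
def pushFront (p : Letter) : List Letter → List Letter
  | [] => [p]
  | q :: w => rewritePair p q ++ w

/-- Appends a letter to a normal form and normalizes. -/
def pushBack (q : Letter) : List Letter → List Letter
  | [] => [q]
  | [p] => rewritePair p q
  | p :: r :: w => p :: pushBack q (r :: w)

def reduce : List Letter → List Letter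
  | [] => []
  | p :: w => pushFront p (reduce w)

theorem length_rewritePair (p q : Letter) : (rewritePair p q).length = 2 := by
  cases p <;> cases q <;> rfl

theorem rewritePair_left_injective {p q q' : Letter} (h : rewritePair p q = rewritePair p q') :
    q = q' := by
  revert p q q'; decide

theorem rewritePair_right_injective {p p' q : Letter} (h : rewritePair p q = rewritePair p' q) :
    p = p' := by
  revert p p' q; decide

theorem length_pushFront (p : Letter) (w : List Letter) :
    (pushFront p w).length = w.length + 1 := by
  cases w with
  | nil => rfl
  | cons q w =>
    simp only [pushFront, List.length_append, length_rewritePair, List.length_cons]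
    omega

theorem length_pushBack (q : Letter) (w : List Letter) : (pushBack q w).length = w.length + 1 := by
  induction w using pushBack.induct <;> simp_all [pushBack, length_rewritePair]

theorem pushFront_injective (p : Letter) : Function.Injective (pushFront p) := by
  intro w w' h
  have hlen : w.length = w'.length := by simpa [length_pushFront] using congrArg List.length h
  match w, w', hlen with
  | [], [], _ => rfl
  | q :: w, q' :: w', _ =>
    obtain ⟨hq, rfl⟩ := List.append_inj h (by simp [length_rewritePair])
    rw [rewritePair_left_injective hq]

theorem pushBack_injective (q : Letter) : Function.Injective (pushBack q) := by
  intro w w' h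
  have hlen : w.length = w'.length := by simpa [length_pushBack] using congrArg List.length h
  induction w using pushBack.induct generalizing w' with
  | case1 => exact (List.length_eq_zero_iff.1 hlen.symm).symm
  | case2 p =>
    obtain ⟨p', rfl⟩ := List.length_eq_one_iff.1 hlen.symm
    rw [rewritePair_right_injective h]
  | case3 p r w ih =>
    match w', hlen, h with
    | p' :: r' :: w', hlen, h =>
      simp only [pushBack, List.cons.injEq] at h
      rw [h.1, ih h.2 (by simpa using hlen)]

theorem pushBack_append (q : Letter) (w₁ : List Letter) {w₂ : List Letter} (h : w₂ ≠ []) :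
    pushBack q (w₁ ++ w₂) = w₁ ++ pushBack q w₂ := by
  induction w₁ with
  | nil => rfl
  | cons p w₁ ih =>
    obtain ⟨r, w, hw⟩ : ∃ r w, w₁ ++ w₂ = r :: w := List.exists_cons_of_ne_nil (by simp [h])
    rw [List.cons_append, hw, pushBack, ← hw, ih, List.cons_append]

/-- The only place where the two ends of a word interact; it holds because the rules do not
overlap. -/
theorem pushFront_pushBack_singleton (p q r : Letter) :
    pushFront p (pushBack q [r]) = pushBack q (pushFront p [r]) := by
  revert p q r; decide

theorem pushFront_pushBack (p q : Letter) (w : List Letter) :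
    pushFront p (pushBack q w) = pushBack q (pushFront p w) := by
  match w with
  | [] => simp [pushFront, pushBack]
  | [r] => exact pushFront_pushBack_singleton p q r
  | r :: s :: w =>
    rw [pushBack, pushFront, pushFront, pushBack_append _ _ (List.cons_ne_nil _ _)]

theorem reduce_append (w₁ w₂ : List Letter) :
    reduce (w₁ ++ w₂) = w₁.foldr pushFront (reduce w₂) := by
  induction w₁ with
  | nil => rfl
  | cons p w₁ ih => rw [List.cons_append, reduce, ih, List.foldr_cons]

theorem reduce_append_singleton (w : List Letter) (q : Letter) :
    reduce (w ++ [q]) = pushBack q (reduce w) := by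
  induction w with
  | nil => rfl
  | cons p w ih => rw [List.cons_append, reduce, ih, reduce, pushFront_pushBack]

theorem reduce_append_eq_foldl (w₁ w₂ : List Letter) :
    reduce (w₁ ++ w₂) = w₂.foldl (fun w q => pushBack q w) (reduce w₁) := by
  induction w₂ using List.reverseRecOn with
  | nil => simp
  | append_singleton w₂ q ih =>
    rw [← List.append_assoc, reduce_append_singleton, ih, List.foldl_append, List.foldl_cons,
      List.foldl_nil]

theorem foldr_pushFront_injective (w : List Letter) : Function.Injective (w.foldr pushFront) := by
  induction w with
  | nil => exact Function.injective_id
  | cons p w ih => exact (pushFront_injective p).comp ih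

theorem foldl_pushBack_injective (w : List Letter) :
    Function.Injective (w.foldl (fun w q => pushBack q w)) := by
  induction w with
  | nil => exact Function.injective_id
  | cons q w ih => exact ih.comp (pushBack_injective q)

def con : Con (FreeMonoid Letter) where
  r w₁ w₂ := reduce w₁.toList = reduce w₂.toList
  iseqv := ⟨fun _ => rfl, Eq.symm, Eq.trans⟩
  mul' {w₁ w₁' w₂ w₂'} h₁ h₂ := by
    simp only [FreeMonoid.toList_mul]
    rw [reduce_append_eq_foldl, h₁, ← reduce_append_eq_foldl, reduce_append, h₂, ← reduce_append]

end Malcev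

abbrev MalcevMonoid : Type := Malcev.con.Quotient

namespace MalcevMonoid

open Malcev

theorem coe_eq_coe {w₁ w₂ : FreeMonoid Letter} :
    (w₁ : MalcevMonoid) = w₂ ↔ reduce w₁.toList = reduce w₂.toList :=
  con.eq

instance : IsCancelMul MalcevMonoid where
  mul_left_cancel m m₁ m₂ h := by
    induction m using Con.induction_on with | H w =>
    induction m₁ using Con.induction_on with | H w₁ =>
    induction m₂ using Con.induction_on with | H w₂ =>
    replace h : ((w * w₁ : FreeMonoid Letter) : MalcevMonoid) = (w * w₂ : FreeMonoid Letter) := h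
    rw [coe_eq_coe, FreeMonoid.toList_mul, FreeMonoid.toList_mul, reduce_append,
      reduce_append] at h
    exact coe_eq_coe.2 (foldr_pushFront_injective _ h)
  mul_right_cancel m m₁ m₂ h := by
    induction m using Con.induction_on with | H w =>
    induction m₁ using Con.induction_on with | H w₁ =>
    induction m₂ using Con.induction_on with | H w₂ =>
    replace h : ((w₁ * w : FreeMonoid Letter) : MalcevMonoid) = (w₂ * w : FreeMonoid Letter) := h
    rw [coe_eq_coe, FreeMonoid.toList_mul, FreeMonoid.toList_mul, reduce_append_eq_foldl,
      reduce_append_eq_foldl] at h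
    exact coe_eq_coe.2 (foldl_pushBack_injective _ h)

def gen (l : Letter) : MalcevMonoid := (FreeMonoid.of l : FreeMonoid Letter)

theorem gen_a_mul_gen_x : gen .a * gen .x = gen .b * gen .y := coe_eq_coe.2 rfl

theorem gen_c_mul_gen_x : gen .c * gen .x = gen .d * gen .y := coe_eq_coe.2 rfl

theorem gen_a_mul_gen_u : gen .a * gen .u = gen .b * gen .v := coe_eq_coe.2 rfl

theorem gen_c_mul_gen_u_ne : gen .c * gen .u ≠ gen .d * gen .v := fun h =>
  absurd (coe_eq_coe.1 h) (by decide)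

end MalcevMonoid

/-- There exists a cancellative semigroup that does not embed into any group. -/
theorem stmt_1 :
    ∃ (S : Type) (_ : Semigroup S),
      (∀ a x y : S, a * x = a * y → x = y) ∧
      (∀ a x y : S, x * a = y * a → x = y) ∧
      ¬ ∃ (G : Type) (_ : Group G) (f : S → G),
          Function.Injective f ∧ ∀ x y : S, f (x * y) = f x * f y := by
  refine ⟨MalcevMonoid, inferInstance, fun _ _ _ => mul_left_cancel,
    fun _ _ _ => mul_right_cancel, ?_⟩
  rintro ⟨G, _, f, hf, hmul⟩
  exact MulHom.not_injective_of_mul_ne_mul MalcevMonoid.gen_a_mul_gen_x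
    MalcevMonoid.gen_c_mul_gen_x MalcevMonoid.gen_a_mul_gen_u MalcevMonoid.gen_c_mul_gen_u_ne
    ⟨f, hmul⟩ hf
end

section
/- Let S be a semigroup satisfying left-sided unique reversibility (right cancellation: x*a = y*a implies x = y) and right-sided unlimited reversibility (for all a, b, the equation a*X = b has at least two distinct solutions X). Then S is infinite. -/
/-! On a finite set a surjective self-map is injective. Left multiplication by any `a` is
surjective because every `a * X = b` is solvable, but it is not injective because `a * X = a`
has two distinct solutions. -/

open Function

theorem Infinite.of_surjective_of_not_injective {α : Type*} {f : α → α} (hsurj : Surjective f)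
    (hinj : ¬Injective f) : Infinite α := by
  by_contra hfin
  have : Finite α := not_infinite_iff_finite.mp hfin
  exact hinj (Finite.injective_iff_surjective.mpr hsurj)

theorem stmt_18_general (S : Type*) [Semigroup S] [Nonempty S]
    (hsolv : ∀ a b : S, ∃ X₁ X₂ : S, X₁ ≠ X₂ ∧ a * X₁ = b ∧ a * X₂ = b) :
    Infinite S := by
  obtain ⟨a⟩ := ‹Nonempty S›
  refine Infinite.of_surjective_of_not_injective (f := (a * ·)) (fun b => ?_) fun hinj => ?_
  · obtain ⟨X, -, -, hX, -⟩ := hsolv a b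
    exact ⟨X, hX⟩
  · obtain ⟨X₁, X₂, hne, h₁, h₂⟩ := hsolv a a
    exact hne (hinj (h₁.trans h₂.symm))

/-- A semigroup with right cancellation in which every equation a*X = b has at
least two distinct solutions is infinite. -/
theorem stmt_18 (S : Type*) [Semigroup S] [Nonempty S]
    (hrc : ∀ a x y : S, x * a = y * a → x = y)
    (hsolv : ∀ a b : S, ∃ X₁ X₂ : S, X₁ ≠ X₂ ∧ a * X₁ = b ∧ a * X₂ = b) :
    Infinite S :=
  stmt_18_general S hsolv
end
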